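/- Counting Lemma: Let F = (V, E) be a finite simple graph and let W, W' : [0,1]^2 → [0,1] be graphons. Then |t(F, W) − t(F, W')| ≤ e(F) · ‖W − W'‖_□, where e(F) = |E| is the number of edges of F. -/

import Mathlib

open MeasureTheory unitInterval Function

noncomputable def cutNorm (U : I → I → ℝ) : ℝ :=
  ⨆ S : Set I, ⨆ T : Set I, ⨆ _ : MeasurableSet S, ⨆ _ : MeasurableSet T,
    |∫ p in S ×ˢ T, U p.1 p.2|

structure IsGraphon (W : I → I → ℝ) : Prop where
  measurable : Measurable (Function.uncurry W)
  symm : ∀ x y, W x y = W y x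
  mem_Icc : ∀ x y, W x y ∈ Set.Icc (0:ℝ) 1

noncomputable def homDensity {V : Type} [Fintype V] [DecidableEq V]
    (F : SimpleGraph V) [DecidableRel F.Adj]
    (W : I → I → ℝ) (hsymm : ∀ x y, W x y = W y x) : ℝ :=
  ∫ x : V → I, ∏ e ∈ F.edgeFinset,
    Sym2.lift ⟨fun i j => W (x i) (x j), fun i j => hsymm (x i) (x j)⟩ e

section Aux

variable {α : Type*} [MeasurableSpace α]

lemma bdd_integrable {μ : Measure α} [IsFiniteMeasure μ] {f : α → ℝ} {C : ℝ}
    (hm : AEStronglyMeasurable f μ) (hb : ∀ x, |f x| ≤ C) : Integrable f μ :=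
  (integrable_const C).mono' hm (Filter.Eventually.of_forall fun x => by
    simpa using hb x)

lemma abs_integral_le {μ : Measure α} [IsProbabilityMeasure μ] {f : α → ℝ} {C : ℝ}
    (hb : ∀ x, |f x| ≤ C) : |∫ x, f x ∂μ| ≤ C := by
  have := norm_integral_le_of_norm_le_const (μ := μ) (f := f) (C := C)
    (Filter.Eventually.of_forall fun x => by simpa using hb x)
  simpa [measure_univ] using this

lemma abs_setIntegral_le {μ : Measure α} [IsProbabilityMeasure μ] {f : α → ℝ} {C : ℝ}
    (hC : 0 ≤ C) (hb : ∀ x, |f x| ≤ C) (S : Set α) : |∫ x in S, f x ∂μ| ≤ C := by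
  have h1 := norm_integral_le_of_norm_le_const (μ := μ.restrict S) (f := f) (C := C)
    (Filter.Eventually.of_forall fun x => by simpa using hb x)
  have h2 : ((μ.restrict S) Set.univ).toReal ≤ 1 := by
    rw [Measure.restrict_apply_univ]
    exact ENNReal.toReal_le_of_le_ofReal zero_le_one (by simpa using prob_le_one)
  calc |∫ x in S, f x ∂μ| ≤ C * ((μ.restrict S) Set.univ).toReal := h1
    _ ≤ C * 1 := by nlinarith
    _ = C := mul_one C

lemma integral_mul_le_setIntegral {μ : Measure α} [IsFiniteMeasure μ]
    {φ h : α → ℝ} (hφm : Measurable φ) (hφ : ∀ x, φ x ∈ Set.Icc (0:ℝ) 1)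
    (hhm : Measurable h) (hh : Integrable h μ) :
    ∫ x, φ x * h x ∂μ ≤ ∫ x in {x | 0 < h x}, h x ∂μ := by
  set S := {x | 0 < h x} with hSdef
  have hS : MeasurableSet S := measurableSet_lt measurable_const hhm
  have hint : Integrable (fun x => φ x * h x) μ :=
    hh.bdd_mul hφm.aestronglyMeasurable (c := 1) (Filter.Eventually.of_forall fun x => by
      simpa [Real.norm_eq_abs, abs_le] using ⟨by linarith [(hφ x).1], (hφ x).2⟩)
  have h1 : ∫ x in S, φ x * h x ∂μ ≤ ∫ x in S, h x ∂μ :=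
    setIntegral_mono_on hint.integrableOn hh.integrableOn hS
      (fun x hx => mul_le_of_le_one_left (le_of_lt hx) (hφ x).2)
  have h2 : ∫ x in Sᶜ, φ x * h x ∂μ ≤ 0 :=
    setIntegral_nonpos hS.compl
      (fun x hx => mul_nonpos_of_nonneg_of_nonpos (hφ x).1 (not_lt.mp hx))
  have h3 := integral_add_compl hS hint
  linarith

lemma exists_set_abs_integral_mul_le {μ : Measure α} [IsFiniteMeasure μ]
    {φ h : α → ℝ} (hφm : Measurable φ) (hφ : ∀ x, φ x ∈ Set.Icc (0:ℝ) 1)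
    (hhm : Measurable h) (hh : Integrable h μ) :
    ∃ S, MeasurableSet S ∧ |∫ x, φ x * h x ∂μ| ≤ |∫ x in S, h x ∂μ| := by
  rcases le_or_gt 0 (∫ x, φ x * h x ∂μ) with hc | hc
  · refine ⟨{x | 0 < h x}, measurableSet_lt measurable_const hhm, ?_⟩
    rw [abs_of_nonneg hc]
    exact le_trans (integral_mul_le_setIntegral hφm hφ hhm hh) (le_abs_self _)
  · refine ⟨{x | 0 < -h x}, measurableSet_lt measurable_const hhm.neg, ?_⟩
    have := integral_mul_le_setIntegral (h := fun x => -h x) hφm hφ hhm.neg hh.neg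
    have e1 : ∫ x, φ x * -h x ∂μ = -∫ x, φ x * h x ∂μ := by
      simp [mul_neg, integral_neg]
    have e2 : ∫ x in {x | 0 < -h x}, -h x ∂μ = -∫ x in {x | 0 < -h x}, h x ∂μ :=
      integral_neg _
    rw [abs_of_neg hc]
    rw [e1, e2] at this
    have : -∫ x, φ x * h x ∂μ ≤ -∫ x in {x | 0 < -h x}, h x ∂μ := this
    exact le_trans this (neg_le_abs _)

end Aux

section CutNorm

lemma setIntegral_kernel_le_one {U : I → I → ℝ} (hUb : ∀ x y, |U x y| ≤ 1)
    (S T : Set I) : |∫ p in S ×ˢ T, U p.1 p.2| ≤ 1 :=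
  abs_setIntegral_le zero_le_one (fun p : I × I => hUb p.1 p.2) _

lemma cutNorm_nonneg (U : I → I → ℝ) : 0 ≤ cutNorm U :=
  Real.iSup_nonneg fun _ => Real.iSup_nonneg fun _ =>
    Real.iSup_nonneg fun _ => Real.iSup_nonneg fun _ => abs_nonneg _

lemma le_cutNorm {U : I → I → ℝ} (hUb : ∀ x y, |U x y| ≤ 1) {S T : Set I}
    (hS : MeasurableSet S) (hT : MeasurableSet T) :
    |∫ p in S ×ˢ T, U p.1 p.2| ≤ cutNorm U := by
  have bdd2 : ∀ S' T' : Set I,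
      (⨆ _ : MeasurableSet S', ⨆ _ : MeasurableSet T', |∫ p in S' ×ˢ T', U p.1 p.2|) ≤ 1 :=
    fun S' T' => Real.iSup_le (fun _ => Real.iSup_le
      (fun _ => setIntegral_kernel_le_one hUb S' T') zero_le_one) zero_le_one
  have bdd1 : ∀ S' : Set I,
      (⨆ T' : Set I, ⨆ _ : MeasurableSet S', ⨆ _ : MeasurableSet T',
        |∫ p in S' ×ˢ T', U p.1 p.2|) ≤ 1 :=
    fun S' => Real.iSup_le (fun T' => bdd2 S' T') zero_le_one
  calc |∫ p in S ×ˢ T, U p.1 p.2|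
      ≤ ⨆ _ : MeasurableSet T, |∫ p in S ×ˢ T, U p.1 p.2| :=
        le_ciSup (f := fun _ : MeasurableSet T => |∫ p in S ×ˢ T, U p.1 p.2|)
          ⟨|∫ p in S ×ˢ T, U p.1 p.2|, by rintro _ ⟨_, rfl⟩; exact le_rfl⟩ hT
    _ ≤ ⨆ _ : MeasurableSet S, ⨆ _ : MeasurableSet T, |∫ p in S ×ˢ T, U p.1 p.2| :=
        le_ciSup (f := fun _ : MeasurableSet S =>
            ⨆ _ : MeasurableSet T, |∫ p in S ×ˢ T, U p.1 p.2|)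
          ⟨⨆ _ : MeasurableSet T, |∫ p in S ×ˢ T, U p.1 p.2|,
            by rintro _ ⟨_, rfl⟩; exact le_rfl⟩ hS
    _ ≤ ⨆ T' : Set I, ⨆ _ : MeasurableSet S, ⨆ _ : MeasurableSet T',
          |∫ p in S ×ˢ T', U p.1 p.2| :=
        le_ciSup (f := fun T' : Set I => ⨆ _ : MeasurableSet S, ⨆ _ : MeasurableSet T',
            |∫ p in S ×ˢ T', U p.1 p.2|)
          ⟨1, by rintro _ ⟨T', rfl⟩; exact bdd2 S T'⟩ T
    _ ≤ cutNorm U :=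
        le_ciSup (f := fun S' : Set I => ⨆ T' : Set I, ⨆ _ : MeasurableSet S',
            ⨆ _ : MeasurableSet T', |∫ p in S' ×ˢ T', U p.1 p.2|)
          ⟨1, by rintro _ ⟨S', rfl⟩; exact bdd1 S'⟩ S

end CutNorm
section Bilinear

lemma meas_param {α β : Type*} [MeasurableSpace α] [MeasurableSpace β]
    {ν : Measure β} [SFinite ν] {f : α × β → ℝ} (hf : Measurable f) :
    Measurable fun x => ∫ y, f (x, y) ∂ν :=
  hf.stronglyMeasurable.integral_prod_right'.measurable

lemma key_bilinear (U : I → I → ℝ) (hU : Measurable (Function.uncurry U))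
    (hUb : ∀ x y, |U x y| ≤ 1) (f g : I → ℝ) (hf : Measurable f) (hg : Measurable g)
    (hf01 : ∀ x, f x ∈ Set.Icc (0:ℝ) 1) (hg01 : ∀ x, g x ∈ Set.Icc (0:ℝ) 1) :
    |∫ s, ∫ t, f s * g t * U s t| ≤ cutNorm U := by
  have hUm : Measurable fun p : I × I => U p.1 p.2 := hU
  have habs : ∀ (c : ℝ) (s t : I), c ∈ Set.Icc (0:ℝ) 1 → |c * U s t| ≤ 1 := by
    intro c s t hc
    rw [abs_mul]
    calc |c| * |U s t| ≤ 1 * 1 := by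
          exact mul_le_mul (abs_le.2 ⟨by linarith [hc.1], hc.2⟩) (hUb s t) (abs_nonneg _)
            zero_le_one
      _ = 1 := one_mul 1
  set h : I → ℝ := fun s => ∫ t, g t * U s t with hdef
  have hhm : Measurable h :=
    meas_param (f := fun p : I × I => g p.2 * U p.1 p.2)
      ((hg.comp measurable_snd).mul hUm)
  have hhb : ∀ s, |h s| ≤ 1 := fun s => abs_integral_le (fun t => habs _ s t (hg01 t))
  have hh : Integrable h volume := bdd_integrable hhm.aestronglyMeasurable hhb
  have eq1 : ∫ s, ∫ t, f s * g t * U s t = ∫ s, f s * h s := by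
    refine integral_congr_ae (Filter.Eventually.of_forall fun s => ?_)
    show ∫ t, f s * g t * U s t = f s * ∫ t, g t * U s t
    rw [← integral_const_mul]
    exact integral_congr_ae (Filter.Eventually.of_forall fun t => by ring)
  obtain ⟨S, hS, hS2⟩ := exists_set_abs_integral_mul_le hf hf01 hhm hh
  have hswap : ∫ s in S, h s = ∫ t, g t * ∫ s in S, U s t := by
    have hint : Integrable (Function.uncurry fun s t => g t * U s t)
        ((volume.restrict S).prod volume) :=
      bdd_integrable ((hg.comp measurable_snd).mul hUm).aestronglyMeasurable
        (fun p => habs _ p.1 p.2 (hg01 p.2))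
    calc ∫ s in S, h s = ∫ t, ∫ s in S, g t * U s t := integral_integral_swap hint
      _ = ∫ t, g t * ∫ s in S, U s t := by
          exact integral_congr_ae (Filter.Eventually.of_forall fun t => integral_const_mul _ _)
  set k : I → ℝ := fun t => ∫ s in S, U s t with hkdef
  have hkm : Measurable k :=
    meas_param (ν := volume.restrict S) (f := fun p : I × I => U p.2 p.1)
      (hUm.comp measurable_swap)
  have hkb : ∀ t, |k t| ≤ 1 := fun t =>
    abs_setIntegral_le zero_le_one (fun s => hUb s t) S
  have hk : Integrable k volume := bdd_integrable hkm.aestronglyMeasurable hkb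
  obtain ⟨T, hT, hT2⟩ := exists_set_abs_integral_mul_le hg hg01 hkm hk
  have hswap2 : ∫ t in T, k t = ∫ s in S, ∫ t in T, U s t := by
    have hint : Integrable (Function.uncurry fun s t => U s t)
        ((volume.restrict S).prod (volume.restrict T)) :=
      bdd_integrable hUm.aestronglyMeasurable (fun p => hUb p.1 p.2)
    exact (integral_integral_swap hint).symm
  have hprod : ∫ s in S, ∫ t in T, U s t = ∫ p in S ×ˢ T, U p.1 p.2 := by
    rw [Measure.volume_eq_prod]
    refine (setIntegral_prod (fun p : I × I => U p.1 p.2) ?_).symm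
    exact bdd_integrable hUm.aestronglyMeasurable (fun p => hUb p.1 p.2)
  calc |∫ s, ∫ t, f s * g t * U s t| = |∫ s, f s * h s| := by rw [eq1]
    _ ≤ |∫ s in S, h s| := hS2
    _ = |∫ t, g t * k t| := by rw [hswap]
    _ ≤ |∫ t in T, k t| := hT2
    _ = |∫ p in S ×ˢ T, U p.1 p.2| := by rw [hswap2, hprod]
    _ ≤ cutNorm U := le_cutNorm hUb hS hT

end Bilinear
section Fubini

lemma Measure.pi_fintype_congr {X : Type} {α : X → Type} [∀ x, MeasurableSpace (α x)]
    (i1 i2 : Fintype X) (μ : ∀ x, Measure (α x)) :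
    @Measure.pi X α i1 _ μ = @Measure.pi X α i2 _ μ := by
  cases Subsingleton.elim i1 i2; rfl

variable {V : Type} [Fintype V] [DecidableEq V]

omit [Fintype V] in
lemma measurable_update_pair (b : V) :
    Measurable fun q : (V → I) × I => Function.update q.1 b q.2 := by
  refine measurable_pi_lambda _ fun v => ?_
  by_cases hv : v = b
  · subst hv
    simpa using (measurable_snd : Measurable fun q : (V → I) × I => q.2)
  · have : (fun q : (V → I) × I => Function.update q.1 b q.2 v)
        = fun q : (V → I) × I => q.1 v := by
      funext q; exact Function.update_of_ne hv _ _
    rw [this]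
    exact (measurable_pi_apply v).comp measurable_fst

lemma integral_eq_integral_update (a : V) (G : (V → I) → ℝ)
    (hm : Measurable G) (hb : ∀ x, |G x| ≤ 1) :
    ∫ x : V → I, G x = ∫ x : V → I, ∫ t : I, G (Function.update x a t) := by
  classical
  letI : Unique {v : V // v = a} := ⟨⟨⟨a, rfl⟩⟩, by rintro ⟨v, hv⟩; exact Subtype.ext hv⟩
  set e := MeasurableEquiv.piEquivPiSubtypeProd (fun _ : V => I) (fun v => v = a) with he
  have hmp : MeasurePreserving e (volume : Measure (V → I))
      ((volume : Measure ({v : V // v = a} → I)).prod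
        (volume : Measure ({v : V // ¬ v = a} → I))) := by
    have base := measurePreserving_piEquivPiSubtypeProd
      (fun _ : V => (volume : Measure I)) (fun v => v = a)
    convert base using 2 <;>
      first
        | rfl
        | (rw [MeasureTheory.volume_pi]; exact Measure.pi_fintype_congr _ _ _)
  have key : ∀ (w : {v : V // v = a} → I) (z : {v : V // ¬ v = a} → I) (t : I),
      Function.update (e.symm (w, z)) a t = e.symm (fun _ => t, z) := by
    intro w z t
    funext v
    by_cases hv : v = a
    · subst hv
      rw [Function.update_self, he, MeasurableEquiv.piEquivPiSubtypeProd_symm_apply]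
      simp
    · rw [Function.update_of_ne hv, he, MeasurableEquiv.piEquivPiSubtypeProd_symm_apply]
      simp [hv]
  have main : ∀ (F : (V → I) → ℝ), Measurable F → (∀ x, |F x| ≤ 1) →
      ∫ x : V → I, F x
        = ∫ z : {v : V // ¬ v = a} → I, ∫ t : I, F (e.symm (fun _ => t, z)) := by
    intro F hFm hFb
    have h1 : ∫ x : V → I, F x
        = ∫ y, F (e.symm y) ∂((volume : Measure ({v : V // v = a} → I)).prod
            (volume : Measure ({v : V // ¬ v = a} → I))) :=
      ((hmp.symm e).integral_comp e.symm.measurableEmbedding F).symm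
    have hint : Integrable (fun y => F (e.symm y))
        ((volume : Measure ({v : V // v = a} → I)).prod
          (volume : Measure ({v : V // ¬ v = a} → I))) :=
      bdd_integrable (hFm.comp e.symm.measurable).aestronglyMeasurable (fun y => hFb _)
    have h2 : ∫ y, F (e.symm y) ∂((volume : Measure ({v : V // v = a} → I)).prod
          (volume : Measure ({v : V // ¬ v = a} → I)))
        = ∫ z, ∫ w, F (e.symm (w, z)) :=
      integral_prod_symm _ hint
    have h3 : ∀ z : {v : V // ¬ v = a} → I,
        ∫ w : {v : V // v = a} → I, F (e.symm (w, z))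
          = ∫ t : I, F (e.symm (fun _ => t, z)) := by
      intro z
      have hmp2 : MeasurePreserving (MeasurableEquiv.funUnique {v : V // v = a} I)
          (volume : Measure ({v : V // v = a} → I)) (volume : Measure I) := by
        have base2 := measurePreserving_funUnique (volume : Measure I) {v : V // v = a}
        convert base2 using 1
        all_goals first | rfl | (rw [MeasureTheory.volume_pi]; exact Measure.pi_fintype_congr _ _ _)
      have hcomp := hmp2.integral_comp (MeasurableEquiv.funUnique _ _).measurableEmbedding
        (fun t : I => F (e.symm (fun _ => t, z)))
      have hptw : ∀ w : {v : V // v = a} → I,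
          F (e.symm (fun _ => MeasurableEquiv.funUnique {v : V // v = a} I w, z))
            = F (e.symm (w, z)) := by
        intro w
        refine congrArg _ (congrArg (fun u => e.symm (u, z)) ?_)
        funext i
        have hi : i = default := Unique.eq_default i
        subst hi
        rfl
      rw [← hcomp]
      exact integral_congr_ae (Filter.Eventually.of_forall fun w => (hptw w).symm)
    rw [h1, h2]
    exact integral_congr_ae (Filter.Eventually.of_forall fun z => h3 z)
  have hL := main G hm hb
  set H : (V → I) → ℝ := fun x => ∫ t : I, G (Function.update x a t) with hHdef
  have hHm : Measurable H :=
    meas_param (f := fun q : (V → I) × I => G (Function.update q.1 a q.2))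
      (hm.comp (measurable_update_pair a))
  have hHb : ∀ x, |H x| ≤ 1 := fun x => abs_integral_le (fun t => hb _)
  have hR := main H hHm hHb
  rw [hL, hR]
  refine integral_congr_ae (Filter.Eventually.of_forall fun z => ?_)
  have hHval : ∀ w : {v : V // v = a} → I,
      H (e.symm (w, z)) = ∫ t : I, G (e.symm (fun _ => t, z)) := by
    intro w
    rw [hHdef]
    exact integral_congr_ae (Filter.Eventually.of_forall fun t => by
      simp only [key w z t])
  calc ∫ t : I, G (e.symm (fun _ => t, z))
      = ∫ t : I, (∫ u : I, G (e.symm (fun _ => u, z))) ∂(volume : Measure I) := by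
        rw [integral_const (∫ u : I, G (e.symm (fun _ => u, z)))]
        simp [measure_univ]
    _ = ∫ t : I, H (e.symm (fun _ => t, z)) :=
        integral_congr_ae (Filter.Eventually.of_forall fun t => (hHval _).symm)

lemma integral_eq_integral_update₂ {a b : V} (G : (V → I) → ℝ)
    (hm : Measurable G) (hb : ∀ x, |G x| ≤ 1) :
    ∫ x : V → I, G x
      = ∫ x : V → I, ∫ s : I, ∫ t : I,
          G (Function.update (Function.update x a s) b t) := by
  have h1 := integral_eq_integral_update b G hm hb
  set H : (V → I) → ℝ := fun x => ∫ t : I, G (Function.update x b t) with hHdef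
  have hHm : Measurable H :=
    meas_param (f := fun q : (V → I) × I => G (Function.update q.1 b q.2))
      (hm.comp (measurable_update_pair b))
  have hHb : ∀ x, |H x| ≤ 1 := fun x => abs_integral_le (fun t => hb _)
  have h2 := integral_eq_integral_update a H hHm hHb
  rw [h1]
  show ∫ x, H x = _
  rw [h2]

end Fubini
section EdgeFactor

variable {V : Type} [Fintype V] [DecidableEq V]

noncomputable def eF (K : I → I → ℝ) (hs : ∀ x y, K x y = K y x)
    (x : V → I) (e : Sym2 V) : ℝ :=
  Sym2.lift ⟨fun i j => K (x i) (x j), fun i j => hs (x i) (x j)⟩ e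

omit [Fintype V] [DecidableEq V] in
lemma eF_mk (K : I → I → ℝ) (hs : ∀ x y, K x y = K y x) (x : V → I) (a b : V) :
    eF K hs x s(a, b) = K (x a) (x b) :=
  Sym2.lift_mk _ _ _

omit [Fintype V] [DecidableEq V] in
lemma eF_mem {K : I → I → ℝ} {hs : ∀ x y, K x y = K y x}
    (hK : ∀ x y, K x y ∈ Set.Icc (0:ℝ) 1) (x : V → I) (e : Sym2 V) :
    eF K hs x e ∈ Set.Icc (0:ℝ) 1 := by
  induction e using Sym2.ind with
  | _ c d => rw [eF_mk]; exact hK _ _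

omit [Fintype V] in
lemma eF_measurable {K : I → I → ℝ} {hs : ∀ x y, K x y = K y x}
    (hKm : Measurable (Function.uncurry K)) (e : Sym2 V) :
    Measurable fun x : V → I => eF K hs x e := by
  induction e using Sym2.ind with
  | _ c d =>
    simp only [eF_mk]
    exact Measurable.comp (f := fun x : V → I => (x c, x d)) hKm
      ((measurable_pi_apply c).prodMk (measurable_pi_apply d))

omit [Fintype V] in
lemma eF_update_of_not_mem {K : I → I → ℝ} {hs : ∀ x y, K x y = K y x}
    {v : V} {e : Sym2 V} (hv : v ∉ e) (x : V → I) (t : I) :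
    eF K hs (Function.update x v t) e = eF K hs x e := by
  induction e using Sym2.ind with
  | _ c d =>
    rw [Sym2.mem_iff] at hv
    push_neg at hv
    rw [eF_mk, eF_mk, Function.update_of_ne (fun h => hv.1 h.symm),
      Function.update_of_ne (fun h => hv.2 h.symm)]

omit [Fintype V] in
lemma eF_update_measurable {K : I → I → ℝ} {hs : ∀ x y, K x y = K y x}
    (hKm : Measurable (Function.uncurry K)) (x : V → I) (v : V) (e : Sym2 V) :
    Measurable fun t : I => eF K hs (Function.update x v t) e := by
  induction e using Sym2.ind with
  | _ c d =>
    simp only [eF_mk]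
    have hc : Measurable fun t : I => Function.update x v t c := by
      by_cases h : c = v
      · subst h; simp only [Function.update_self]; exact measurable_id
      · simp only [Function.update_of_ne h]; exact measurable_const
    have hd : Measurable fun t : I => Function.update x v t d := by
      by_cases h : d = v
      · subst h; simp only [Function.update_self]; exact measurable_id
      · simp only [Function.update_of_ne h]; exact measurable_const
    exact hKm.comp (hc.prodMk hd)

omit [Fintype V] [DecidableEq V] in
lemma sym2_eq_of_mem {a b : V} (hab : a ≠ b) {e : Sym2 V}
    (ha : a ∈ e) (hb : b ∈ e) : e = s(a, b) := by
  induction e using Sym2.ind with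
  | _ c d =>
    rw [Sym2.mem_iff] at ha hb
    rcases ha with h1 | h1 <;> rcases hb with h2 | h2
    · exact absurd (h1.trans h2.symm) hab
    · rw [← h1, ← h2]
    · rw [← h1, ← h2]; exact Sym2.eq_swap
    · exact absurd (h1.trans h2.symm) hab

omit [Fintype V] [DecidableEq V] in
lemma sym2_exists_mk (e : Sym2 V) : ∃ a b, e = s(a, b) :=
  Sym2.ind (fun a b => ⟨a, b, rfl⟩) e

lemma key_edge {a b : V} (hab : a ≠ b) (U : I → I → ℝ)
    (hU : Measurable (Function.uncurry U)) (hUb : ∀ x y, |U x y| ≤ 1)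
    (Φ : (V → I) → ℝ) (hΦm : Measurable Φ) (hΦ01 : ∀ x, Φ x ∈ Set.Icc (0:ℝ) 1)
    (A B : (V → I) → I → ℝ)
    (hA : ∀ x, Measurable (A x)) (hB : ∀ x, Measurable (B x))
    (hA01 : ∀ x s, A x s ∈ Set.Icc (0:ℝ) 1) (hB01 : ∀ x t, B x t ∈ Set.Icc (0:ℝ) 1)
    (hfac : ∀ x s t, Φ (Function.update (Function.update x a s) b t) = A x s * B x t) :
    |∫ x : V → I, U (x a) (x b) * Φ x| ≤ cutNorm U := by
  have hGm : Measurable fun x : V → I => U (x a) (x b) * Φ x :=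
    (Measurable.comp (f := fun x : V → I => (x a, x b)) hU
      ((measurable_pi_apply a).prodMk (measurable_pi_apply b))).mul hΦm
  have hGb : ∀ x : V → I, |U (x a) (x b) * Φ x| ≤ 1 := by
    intro x
    rw [abs_mul]
    calc |U (x a) (x b)| * |Φ x| ≤ 1 * 1 :=
        mul_le_mul (hUb _ _)
          (abs_le.2 ⟨by linarith [(hΦ01 x).1], (hΦ01 x).2⟩) (abs_nonneg _) zero_le_one
      _ = 1 := one_mul 1
  rw [integral_eq_integral_update₂ (a := a) (b := b) _ hGm hGb]
  refine abs_integral_le fun x => ?_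
  have hya : ∀ s t : I, (Function.update (Function.update x a s) b t) a = s := by
    intro s t
    rw [Function.update_of_ne hab, Function.update_self]
  have hyb : ∀ s t : I, (Function.update (Function.update x a s) b t) b = t := by
    intro s t
    rw [Function.update_self]
  have hinner : ∫ s : I, ∫ t : I,
        U ((Function.update (Function.update x a s) b t) a)
          ((Function.update (Function.update x a s) b t) b) *
          Φ (Function.update (Function.update x a s) b t)
      = ∫ s : I, ∫ t : I, A x s * B x t * U s t := by
    refine integral_congr_ae (Filter.Eventually.of_forall fun s => ?_)
    refine integral_congr_ae (Filter.Eventually.of_forall fun t => ?_)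
    simp only [hya, hyb, hfac]
    ring
  rw [hinner]
  exact key_bilinear U hU hUb (A x) (B x) (hA x) (hB x) (hA01 x) (hB01 x)

end EdgeFactor

section Main

lemma Icc_mul {p q : ℝ} (hp : p ∈ Set.Icc (0:ℝ) 1) (hq : q ∈ Set.Icc (0:ℝ) 1) :
    p * q ∈ Set.Icc (0:ℝ) 1 :=
  ⟨mul_nonneg hp.1 hq.1, by nlinarith [hp.1, hp.2, hq.1, hq.2]⟩

lemma Icc_prod {β : Type*} {u : Finset β} {f : β → ℝ}
    (h : ∀ e ∈ u, f e ∈ Set.Icc (0:ℝ) 1) : (∏ e ∈ u, f e) ∈ Set.Icc (0:ℝ) 1 :=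
  ⟨Finset.prod_nonneg fun i hi => (h i hi).1,
    Finset.prod_le_one (fun i hi => (h i hi).1) (fun i hi => (h i hi).2)⟩

lemma abs_Icc_mul_le {c d : ℝ} (hc : c ∈ Set.Icc (0:ℝ) 1) (hd : d ∈ Set.Icc (0:ℝ) 1) :
    |c * d| ≤ 1 := by
  rw [abs_of_nonneg (mul_nonneg hc.1 hd.1)]
  nlinarith [hc.1, hc.2, hd.1, hd.2]

lemma counting_aux {V : Type} [Fintype V] [DecidableEq V]
    (W W' : I → I → ℝ) (hW : IsGraphon W) (hW' : IsGraphon W') (s : Finset (Sym2 V)) :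
    ∀ t : Finset (Sym2 V), (∀ e ∈ s, ¬ e.IsDiag) → (∀ e ∈ s, e ∉ t) →
    |(∫ x : V → I, (∏ e ∈ t, eF W' hW'.symm x e) * ∏ e ∈ s, eF W hW.symm x e) -
      ∫ x : V → I, (∏ e ∈ t, eF W' hW'.symm x e) * ∏ e ∈ s, eF W' hW'.symm x e|
      ≤ s.card * cutNorm (fun p q => W p q - W' p q) := by
  classical
  set U : I → I → ℝ := fun p q => W p q - W' p q with hUdef
  have hUm : Measurable (Function.uncurry U) := hW.measurable.sub hW'.measurable
  have hUb : ∀ p q, |U p q| ≤ 1 := fun p q => by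
    have h1 := hW.mem_Icc p q
    have h2 := hW'.mem_Icc p q
    rw [hUdef, abs_le]
    constructor <;> simp <;> [linarith [h1.1, h2.2]; linarith [h1.2, h2.1]]
  induction s using Finset.induction_on with
  | empty => intro t _ _; simp
  | @insert e s₀ he ih =>
    intro t hdiag hnm
    obtain ⟨a, b, hE⟩ := sym2_exists_mk e
    have hab : a ≠ b := by
      intro h
      apply hdiag e (Finset.mem_insert_self e _)
      rw [hE, h]
      exact Sym2.mk_isDiag_iff.mpr rfl
    subst hE
    have het : s(a, b) ∉ t := hnm _ (Finset.mem_insert_self _ _)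
    -- abbreviations
    have measprod : ∀ (K : I → I → ℝ) (hs : ∀ p q, K p q = K q p),
        Measurable (Function.uncurry K) → ∀ u : Finset (Sym2 V),
        Measurable fun x : V → I => ∏ e' ∈ u, eF K hs x e' := fun K hs hKm u =>
      Finset.measurable_prod u (fun e' _ => eF_measurable hKm e')
    have iccprod : ∀ (K : I → I → ℝ) (hs : ∀ p q, K p q = K q p),
        (∀ p q, K p q ∈ Set.Icc (0:ℝ) 1) → ∀ (u : Finset (Sym2 V)) (x : V → I),
        (∏ e' ∈ u, eF K hs x e') ∈ Set.Icc (0:ℝ) 1 := fun K hs hK u x =>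
      Icc_prod (fun e' _ => eF_mem hK x e')
    set Φ : (V → I) → ℝ := fun y =>
      (∏ e' ∈ t, eF W' hW'.symm y e') * ∏ e' ∈ s₀, eF W hW.symm y e' with hΦdef
    have hΦm : Measurable Φ :=
      (measprod W' hW'.symm hW'.measurable t).mul (measprod W hW.symm hW.measurable s₀)
    have hΦ01 : ∀ y, Φ y ∈ Set.Icc (0:ℝ) 1 := fun y =>
      Icc_mul (iccprod W' hW'.symm hW'.mem_Icc t y) (iccprod W hW.symm hW.mem_Icc s₀ y)
    -- the factorization
    set A : (V → I) → I → ℝ := fun x sv =>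
      (∏ e' ∈ t.filter (fun e' => a ∈ e'), eF W' hW'.symm (Function.update x a sv) e') *
      ∏ e' ∈ s₀.filter (fun e' => a ∈ e'), eF W hW.symm (Function.update x a sv) e' with hAdef
    set B : (V → I) → I → ℝ := fun x tv =>
      (∏ e' ∈ t.filter (fun e' => ¬ a ∈ e'), eF W' hW'.symm (Function.update x b tv) e') *
      ∏ e' ∈ s₀.filter (fun e' => ¬ a ∈ e'), eF W hW.symm (Function.update x b tv) e' with hBdef
    have hsplit : ∀ (K : I → I → ℝ) (hs : ∀ p q, K p q = K q p) (u : Finset (Sym2 V)),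
        s(a, b) ∉ u → ∀ (x : V → I) (sv tv : I),
        ∏ e' ∈ u, eF K hs (Function.update (Function.update x a sv) b tv) e'
          = (∏ e' ∈ u.filter (fun e' => a ∈ e'), eF K hs (Function.update x a sv) e') *
            ∏ e' ∈ u.filter (fun e' => ¬ a ∈ e'), eF K hs (Function.update x b tv) e' := by
      intro K hs u hu x sv tv
      rw [← Finset.prod_filter_mul_prod_filter_not u (fun e' => a ∈ e')]
      congr 1
      · refine Finset.prod_congr rfl fun e' he' => ?_
        rw [Finset.mem_filter] at he'
        have hb' : b ∉ e' := by
          intro hb'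
          exact hu ((sym2_eq_of_mem hab he'.2 hb') ▸ he'.1)
        exact eF_update_of_not_mem hb' _ _
      · refine Finset.prod_congr rfl fun e' he' => ?_
        rw [Finset.mem_filter] at he'
        rw [Function.update_comm hab]
        exact eF_update_of_not_mem he'.2 _ _
    have hfac : ∀ (x : V → I) (sv tv : I),
        Φ (Function.update (Function.update x a sv) b tv) = A x sv * B x tv := by
      intro x sv tv
      rw [hΦdef, hAdef, hBdef]
      simp only
      rw [hsplit W' hW'.symm t het x sv tv, hsplit W hW.symm s₀ (fun h => he h) x sv tv]
      ring
    have hAm : ∀ x, Measurable (A x) := fun x =>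
      (Finset.measurable_prod _ (fun e' _ => eF_update_measurable hW'.measurable x a e')).mul
        (Finset.measurable_prod _ (fun e' _ => eF_update_measurable hW.measurable x a e'))
    have hBm : ∀ x, Measurable (B x) := fun x =>
      (Finset.measurable_prod _ (fun e' _ => eF_update_measurable hW'.measurable x b e')).mul
        (Finset.measurable_prod _ (fun e' _ => eF_update_measurable hW.measurable x b e'))
    have hA01 : ∀ x sv, A x sv ∈ Set.Icc (0:ℝ) 1 := fun x sv =>
      Icc_mul (Icc_prod fun e' _ => eF_mem hW'.mem_Icc _ e')
        (Icc_prod fun e' _ => eF_mem hW.mem_Icc _ e')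
    have hB01 : ∀ x tv, B x tv ∈ Set.Icc (0:ℝ) 1 := fun x tv =>
      Icc_mul (Icc_prod fun e' _ => eF_mem hW'.mem_Icc _ e')
        (Icc_prod fun e' _ => eF_mem hW.mem_Icc _ e')
    -- the three integrals
    have hintg : ∀ f : (V → I) → ℝ, Measurable f → (∀ x, |f x| ≤ 1) →
        Integrable f (volume : Measure (V → I)) := fun f hm hb =>
      bdd_integrable hm.aestronglyMeasurable hb
    have hWab : Measurable fun x : V → I => W (x a) (x b) :=
      Measurable.comp (f := fun x : V → I => (x a, x b)) hW.measurable
        ((measurable_pi_apply a).prodMk (measurable_pi_apply b))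
    have hW'ab : Measurable fun x : V → I => W' (x a) (x b) :=
      Measurable.comp (f := fun x : V → I => (x a, x b)) hW'.measurable
        ((measurable_pi_apply a).prodMk (measurable_pi_apply b))
    have hint1 : Integrable (fun x : V → I => W (x a) (x b) * Φ x) volume :=
      hintg _ (hWab.mul hΦm) (fun x => abs_Icc_mul_le (hW.mem_Icc _ _) (hΦ01 x))
    have hint2 : Integrable (fun x : V → I => W' (x a) (x b) * Φ x) volume :=
      hintg _ (hW'ab.mul hΦm) (fun x => abs_Icc_mul_le (hW'.mem_Icc _ _) (hΦ01 x))
    set cN := cutNorm U with hcN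
    set P := ∫ x : V → I, (∏ e' ∈ t, eF W' hW'.symm x e') *
      ∏ e' ∈ insert s(a, b) s₀, eF W hW.symm x e' with hP
    set R := ∫ x : V → I, (∏ e' ∈ t, eF W' hW'.symm x e') *
      ∏ e' ∈ insert s(a, b) s₀, eF W' hW'.symm x e' with hR
    set M := ∫ x : V → I, (∏ e' ∈ insert s(a, b) t, eF W' hW'.symm x e') *
      ∏ e' ∈ s₀, eF W hW.symm x e' with hM
    set R' := ∫ x : V → I, (∏ e' ∈ insert s(a, b) t, eF W' hW'.symm x e') *
      ∏ e' ∈ s₀, eF W' hW'.symm x e' with hR'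
    have expandP : P = ∫ x : V → I, W (x a) (x b) * Φ x := by
      rw [hP]
      refine integral_congr_ae (Filter.Eventually.of_forall fun x => ?_)
      simp only [Finset.prod_insert he, eF_mk, hΦdef]
      ring
    have expandM : M = ∫ x : V → I, W' (x a) (x b) * Φ x := by
      rw [hM]
      refine integral_congr_ae (Filter.Eventually.of_forall fun x => ?_)
      simp only [Finset.prod_insert het, eF_mk, hΦdef]
      ring
    have expandR : R = R' := by
      rw [hR, hR']
      refine integral_congr_ae (Filter.Eventually.of_forall fun x => ?_)
      simp only [Finset.prod_insert he, Finset.prod_insert het, eF_mk]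
      ring
    have step1 : P - M = ∫ x : V → I, U (x a) (x b) * Φ x := by
      rw [expandP, expandM, ← integral_sub hint1 hint2]
      refine integral_congr_ae (Filter.Eventually.of_forall fun x => ?_)
      simp only [hUdef]
      ring
    have step2 : |P - M| ≤ cN := by
      rw [step1, hcN]
      exact key_edge hab U hUm hUb Φ hΦm hΦ01 A B hAm hBm hA01 hB01 hfac
    have step3 : |M - R'| ≤ s₀.card * cN := by
      rw [hM, hR', hcN]
      exact ih (insert s(a, b) t)
        (fun e' he' => hdiag e' (Finset.mem_insert_of_mem he'))
        (fun e' he' => by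
          rw [Finset.mem_insert]
          push_neg
          exact ⟨fun h => he (h ▸ he'), hnm e' (Finset.mem_insert_of_mem he')⟩)
    have hcard : ((insert s(a, b) s₀).card : ℝ) = s₀.card + 1 := by
      rw [Finset.card_insert_of_notMem he]
      push_cast
      ring
    calc |P - R| = |P - R'| := by rw [expandR]
      _ ≤ |P - M| + |M - R'| := abs_sub_le P M R'
      _ ≤ cN + s₀.card * cN := add_le_add step2 step3
      _ = ((insert s(a, b) s₀).card : ℝ) * cN := by rw [hcard]; ring

end Main

/-- **Counting Lemma.** For a finite simple graph `F` and graphons `W, W'`,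
`|t(F, W) − t(F, W')| ≤ e(F) · ‖W − W'‖_□`. -/
theorem counting_lemma {V : Type} [Fintype V] [DecidableEq V]
    (F : SimpleGraph V) [DecidableRel F.Adj]
    (W W' : I → I → ℝ) (hW : IsGraphon W) (hW' : IsGraphon W') :
    |homDensity F W hW.symm - homDensity F W' hW'.symm| ≤
      (F.edgeFinset.card : ℝ) * cutNorm (fun x y => W x y - W' x y) := by
  have h := counting_aux W W' hW hW' F.edgeFinset ∅
    (fun e he => SimpleGraph.not_isDiag_of_mem_edgeSet F (SimpleGraph.mem_edgeFinset.1 he))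
    (fun e _ => Finset.notMem_empty e)
  simpa [homDensity, eF] using h
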